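/- Let 𝕊 and 𝕋 satisfy the hypotheses of the times-over-plus theorem, and additionally let the binary term ⋄ of 𝕊 be idempotent: ⋄(x,x) =_𝕊 x. Then there exists no composite theory of 𝕊 and 𝕋. -/

import Mathlib

/-! ### Algebraic theories, equational logic, and composite theories -/

structure Signature where
  Op : Type
  ar : Op → Nat

inductive Term (Sg : Signature) (V : Type) : Type
  | var : V → Term Sg V
  | op : (o : Sg.Op) → (Fin (Sg.ar o) → Term Sg V) → Term Sg V

def Term.subst {Sg : Signature} {V W : Type} : Term Sg V → (V → Term Sg W) → Term Sg W
  | .var v, f => f v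
  | .op o ts, f => .op o (fun i => (ts i).subst f)

/-- Renaming of variables. -/
def Term.rename {Sg : Signature} {V W : Type} (f : V → W) (t : Term Sg V) : Term Sg W :=
  t.subst (fun v => .var (f v))

/-- The set of free variables of a term. -/
def Term.fv {Sg : Signature} {V : Type} : Term Sg V → Set V
  | .var v => {v}
  | .op _ ts => ⋃ i, (ts i).fv

/-- An algebraic theory: a signature together with a set of equations (axioms),
given as pairs of terms over the variables ℕ. -/
structure Theory where
  sig : Signature
  Ax : Term sig Nat → Term sig Nat → Prop

/-- Provable equality in equational logic over a theory. -/
inductive Theory.Eq (T : Theory) : {V : Type} → Term T.sig V → Term T.sig V → Prop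
  | ax {V : Type} {s t : Term T.sig Nat} (h : T.Ax s t) (f : Nat → Term T.sig V) :
      Theory.Eq T (s.subst f) (t.subst f)
  | refl {V : Type} (t : Term T.sig V) : Theory.Eq T t t
  | symm {V : Type} {s t : Term T.sig V} : Theory.Eq T s t → Theory.Eq T t s
  | trans {V : Type} {s t u : Term T.sig V} :
      Theory.Eq T s t → Theory.Eq T t u → Theory.Eq T s u
  | congr {V : Type} (o : T.sig.Op) {ts ts' : Fin (T.sig.ar o) → Term T.sig V}
      (h : ∀ i, Theory.Eq T (ts i) (ts' i)) : Theory.Eq T (.op o ts) (.op o ts')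
  | subst {V W : Type} {s t : Term T.sig V} (f : V → Term T.sig W) :
      Theory.Eq T s t → Theory.Eq T (s.subst f) (t.subst f)

/-- Disjoint union of two signatures. -/
def Signature.sum (A B : Signature) : Signature := ⟨A.Op ⊕ B.Op, Sum.elim A.ar B.ar⟩

/-- Embedding of terms of the first theory into the sum signature. -/
def Term.inL {A B : Signature} {V : Type} : Term A V → Term (A.sum B) V
  | .var v => .var v
  | .op o ts => .op (Sum.inl o) (fun i => (ts i).inL)

/-- Embedding of terms of the second theory into the sum signature. -/
def Term.inR {A B : Signature} {V : Type} : Term B V → Term (A.sum B) V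
  | .var v => .var v
  | .op o ts => .op (Sum.inr o) (fun i => (ts i).inR)

/-- A closed term, regarded as a term over any variable set. -/
def Term.ofClosed {Sg : Signature} {V : Type} (t : Term Sg Empty) : Term Sg V :=
  t.rename (fun x => x.elim)

/-- A candidate composite theory of `S` and `T`: a theory over the disjoint
union of the two signatures. -/
structure Composite (S T : Theory) where
  Ax : Term (S.sig.sum T.sig) Nat → Term (S.sig.sum T.sig) Nat → Prop

def Composite.U {S T : Theory} (C : Composite S T) : Theory := ⟨S.sig.sum T.sig, C.Ax⟩

/-- A separated term: a `T`-term with `S`-terms substituted for its variables. -/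
def sep {S T : Theory} {V : Type} (t : Term T.sig Nat) (σ : Nat → Term S.sig V) :
    Term (S.sig.sum T.sig) V :=
  (Term.inR (A := S.sig) t).subst (fun n => Term.inL (σ n))

/-- `C` is a composite theory of `S` and `T` in the sense of Pirog–Staton:
it contains both theories, and satisfies separation and essential uniqueness. -/
structure IsComposite {S T : Theory} (C : Composite S T) : Prop where
  containsS : ∀ {V : Type} (s s' : Term S.sig V), S.Eq s s' → C.U.Eq s.inL s'.inL
  containsT : ∀ {V : Type} (t t' : Term T.sig V), T.Eq t t' → C.U.Eq t.inR t'.inR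
  separation : ∀ {V : Type} (u : Term (S.sig.sum T.sig) V),
      ∃ (t : Term T.sig Nat) (σ : Nat → Term S.sig V), C.U.Eq u (sep t σ)
  essUniq : ∀ {V : Type} (t t' : Term T.sig Nat) (σ σ' : Nat → Term S.sig V),
      C.U.Eq (sep t σ) (sep t' σ') →
      ∃ (Z : Type) (f g : Nat → Z),
        T.Eq (t.rename f) (t'.rename g) ∧
        (∀ i j, f i = f j ↔ S.Eq (σ i) (σ j)) ∧
        (∀ i j, g i = g j ↔ S.Eq (σ' i) (σ' j)) ∧
        (∀ i j, f i = g j ↔ S.Eq (σ i) (σ' j))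

/-- Property: any term provably equal to a variable-free term is variable-free. -/
def VarFree0 (T : Theory) : Prop :=
  ∀ (V : Type) (t t' : Term T.sig V), t.fv = ∅ → T.Eq t t' → t'.fv = ∅

/-- Property: any term provably equal to a variable `x` has free variables `⊆ {x}`. -/
def VarSingle (T : Theory) : Prop :=
  ∀ (V : Type) (x : V) (t : Term T.sig V), T.Eq t (.var x) → t.fv ⊆ {x}

/-- Property: every operation of positive arity has a unit constant. -/
def HasUnits (S : Theory) : Prop :=
  ∀ o : S.sig.Op, 1 ≤ S.sig.ar o →
    ∃ e : Term S.sig Empty, ∀ k : Fin (S.sig.ar o),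
      S.Eq (.op o (fun i => if i = k then .var (0 : Nat) else e.ofClosed)) (.var 0)

/-- Application of a term with (at most) free variables `0, 1` to two arguments. -/
def app2 {Sg : Signature} {V : Type} (t : Term Sg Nat) (A B : Term Sg V) : Term Sg V :=
  t.subst (fun n => if n = 0 then A else B)

/-! Separate the mixed term `(x ◦ y) ⋄ (z ◦ w)` (variables `0, 1, 2, 3` below) as `t[σ]`.
Identifying `z` with `x` and `w` with `y` and using idempotence of `⋄` gives `x ◦ y`, so by
essential uniqueness each `S`-component `σ i` has its variables either among `x, z` or among
`y, w`. Now substitute the unit of `◦` for `y` and `z`: the unit laws turn the mixed term into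
`x ⋄ w`, while every component containing `y` or `z` collapses to that unit, because the unit of
`◦` absorbs every operation of `S` (which has units). The remaining components become `x` or `w`,
so essential uniqueness makes `x ⋄ w` equal to `x` or to `w` in `S`, and the unit laws of `⋄`
refute both. -/

namespace Term

variable {Sg A B : Signature} {V W X : Type}

@[simp] theorem var_subst (v : V) (f : V → Term Sg W) : (var v).subst f = f v := rfl

@[simp] theorem op_subst (o : Sg.Op) (ts : Fin (Sg.ar o) → Term Sg V) (f : V → Term Sg W) :
    (op o ts).subst f = op o fun i => (ts i).subst f := rfl

@[simp] theorem fv_var (v : V) : (var v : Term Sg V).fv = {v} := rfl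

@[simp] theorem fv_op (o : Sg.Op) (ts : Fin (Sg.ar o) → Term Sg V) :
    (op o ts).fv = ⋃ i, (ts i).fv := rfl

theorem subst_subst (t : Term Sg V) (f : V → Term Sg W) (g : W → Term Sg X) :
    (t.subst f).subst g = t.subst fun v => (f v).subst g := by
  induction t with
  | var v => rfl
  | op o ts ih => simp [ih]

@[simp] theorem subst_var (t : Term Sg V) : t.subst var = t := by
  induction t with
  | var v => rfl
  | op o ts ih => simp [ih]

theorem subst_congr {t : Term Sg V} {f g : V → Term Sg W} (h : ∀ v ∈ t.fv, f v = g v) :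
    t.subst f = t.subst g := by
  induction t with
  | var v => exact h v rfl
  | op o ts ih =>
    simp only [op_subst, op.injEq, heq_eq_eq, true_and]
    funext i
    exact ih i fun v hv => h v (Set.mem_iUnion_of_mem i hv)

theorem subst_eq_self {t : Term Sg V} {f : V → Term Sg V} (h : ∀ v ∈ t.fv, f v = var v) :
    t.subst f = t :=
  (subst_congr h).trans t.subst_var

theorem subst_eq_subst_of_fv_eq_empty {t : Term Sg V} (ht : t.fv = ∅) (f g : V → Term Sg W) :
    t.subst f = t.subst g :=
  subst_congr (by simp [ht])

theorem fv_subst (t : Term Sg V) (f : V → Term Sg W) :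
    (t.subst f).fv = ⋃ v ∈ t.fv, (f v).fv := by
  induction t with
  | var v => simp
  | op o ts ih => simp only [op_subst, fv_op, ih, Set.biUnion_iUnion]

theorem fv_rename (t : Term Sg V) (f : V → W) : (t.rename f).fv = f '' t.fv := by
  simp [rename, fv_subst, Set.image_eq_iUnion]

@[simp] theorem inL_var (v : V) : (var v : Term A V).inL = (var v : Term (A.sum B) V) := rfl

@[simp] theorem inR_var (v : V) : (var v : Term B V).inR = (var v : Term (A.sum B) V) := rfl

theorem inL_subst (s : Term A V) (f : V → Term A W) :
    (s.subst f).inL = (s.inL (B := B)).subst fun v => (f v).inL := by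
  induction s with
  | var v => rfl
  | op o ts ih => exact congrArg (op (Sg := A.sum B) (Sum.inl o)) (funext ih)

theorem inR_subst (s : Term B V) (f : V → Term B W) :
    (s.subst f).inR = (s.inR (A := A)).subst fun v => (f v).inR := by
  induction s with
  | var v => rfl
  | op o ts ih => exact congrArg (op (Sg := A.sum B) (Sum.inr o)) (funext ih)

@[simp] theorem fv_inL (s : Term A V) : (s.inL (B := B)).fv = s.fv := by
  induction s with
  | var v => rfl
  | op o ts ih => exact Set.iUnion_congr ih

@[simp] theorem fv_inR (s : Term B V) : (s.inR (A := A)).fv = s.fv := by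
  induction s with
  | var v => rfl
  | op o ts ih => exact Set.iUnion_congr ih

@[simp] theorem ofClosed_subst (t : Term Sg Empty) (f : V → Term Sg W) :
    (ofClosed t : Term Sg V).subst f = ofClosed t := by
  rw [ofClosed, rename, ofClosed, rename, subst_subst]
  exact congrArg t.subst (funext nofun)

@[simp] theorem fv_ofClosed (t : Term Sg Empty) : (ofClosed t : Term Sg V).fv = ∅ := by
  simp [ofClosed, fv_rename, Set.eq_empty_of_isEmpty]

@[simp] theorem inL_ofClosed (t : Term A Empty) :
    (ofClosed t : Term A V).inL = ofClosed (t.inL (B := B)) := by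
  rw [ofClosed, rename, inL_subst]
  exact congrArg _ (funext nofun)

@[simp] theorem inR_ofClosed (t : Term B Empty) :
    (ofClosed t : Term B V).inR = ofClosed (t.inR (A := A)) := by
  rw [ofClosed, rename, inR_subst]
  exact congrArg _ (funext nofun)

end Term

open Term

section App2

variable {Sg A B : Signature} {V W : Type}

theorem app2_subst (t : Term Sg Nat) (a b : Term Sg V) (f : V → Term Sg W) :
    (app2 t a b).subst f = app2 t (a.subst f) (b.subst f) := by
  simp only [app2, subst_subst, apply_ite (Term.subst · f)]

theorem inL_app2 (t : Term A Nat) (a b : Term A V) :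
    (app2 t a b).inL (B := B) = app2 t.inL a.inL b.inL := by
  simp only [app2, inL_subst, apply_ite Term.inL]

theorem inR_app2 (t : Term B Nat) (a b : Term B V) :
    (app2 t a b).inR (A := A) = app2 t.inR a.inR b.inR := by
  simp only [app2, inR_subst, apply_ite Term.inR]

theorem rename_eq_app2 {t : Term Sg Nat} (ht : t.fv ⊆ {0, 1}) (g : Nat → W) :
    t.rename g = app2 t (var (g 0)) (var (g 1)) := by
  refine subst_congr fun n hn => ?_
  obtain rfl | rfl := ht hn <;> simp

end App2

namespace Theory

variable {U : Theory} {V W : Type}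

theorem eq_subst_congr (t : Term U.sig V) {f g : V → Term U.sig W}
    (h : ∀ v ∈ t.fv, U.Eq (f v) (g v)) : U.Eq (t.subst f) (t.subst g) := by
  induction t with
  | var v => exact h v rfl
  | op o ts ih => exact .congr o fun i => ih i fun v hv => h v (Set.mem_iUnion_of_mem i hv)

theorem eq_app2_congr (t : Term U.sig Nat) {a a' b b' : Term U.sig V}
    (ha : U.Eq a a') (hb : U.Eq b b') : U.Eq (app2 t a b) (app2 t a' b') :=
  eq_subst_congr t fun n _ => by split_ifs <;> assumption

theorem Eq.subst_eq_subst_of_fv_eq_empty {u w : Term U.sig V} (h : U.Eq u w) (hw : w.fv = ∅)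
    (f g : V → Term U.sig W) : U.Eq (u.subst f) (u.subst g) := by
  have hfg := h.subst f
  rw [Term.subst_eq_subst_of_fv_eq_empty hw f g] at hfg
  exact hfg.trans (h.subst g).symm

theorem Eq.eq_var_of_rename {s : Term U.sig V} {a : V} (hs : s.fv ⊆ {a}) {ρ : V → W} {b : W}
    (h : U.Eq (s.rename ρ) (var b)) : U.Eq s (var a) := by
  have h' := h.subst fun _ => var a
  rwa [Term.rename, subst_subst, subst_eq_self fun v hv => by rw [hs hv]; rfl] at h'

end Theory

theorem VarFree0.not_eq_var {U : Theory} (hU : VarFree0 U) {V : Type} {t : Term U.sig V}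
    (ht : t.fv = ∅) (x : V) : ¬ U.Eq t (var x) :=
  fun h => Set.singleton_ne_empty x (hU V t _ ht h)

theorem VarSingle.not_eq_var_var {U : Theory} (hU : VarSingle U) {V : Type} {a b : V}
    (hab : a ≠ b) : ¬ U.Eq (var a) (var b) :=
  fun h => hab (hU V b _ h rfl)

theorem VarSingle.eq_of_mem_fv_of_rename_eq_var {U : Theory} (hU : VarSingle U) {V W : Type}
    {s : Term U.sig V} {ρ : V → W} {b : W} (h : U.Eq (s.rename ρ) (var b)) {v : V}
    (hv : v ∈ s.fv) : ρ v = b :=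
  hU W b _ h (by rw [fv_rename]; exact Set.mem_image_of_mem ρ hv)

theorem VarSingle.fv_subset_of_eq_app2 {U : Theory} (hU : VarSingle U) {c : Term U.sig Nat}
    {e : Term U.sig Empty} (hcu : U.Eq (app2 c (var 0) (ofClosed e)) (var 0))
    {V : Type} {u : Term U.sig V} {a b : V} (hab : a ≠ b)
    (h : U.Eq u (app2 c (var a) (var b))) : u.fv ⊆ {a, b} := by
  classical
  intro v hv
  by_cases hvb : v = b
  · exact .inr hvb
  -- replacing `b` by the unit leaves `u` equal to the variable `a`
  let φ : V → Term U.sig V := fun z => if z = b then ofClosed e else var z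
  have hφ : U.Eq (u.subst φ) (var a) := by
    refine (h.subst φ).trans ?_
    simpa [app2_subst, φ, hab] using hcu.subst fun _ => var a
  exact .inl (hU V a _ hφ (by rw [fv_subst]; exact Set.mem_biUnion hv (by simp [φ, hvb])))

theorem VarFree0.not_app2_eq_left {U : Theory} (hU : VarFree0 U) {d : Term U.sig Nat}
    {e : Term U.sig Empty} (hdu : U.Eq (app2 d (ofClosed e) (var 0)) (var 0))
    {V : Type} {a b : V} (hab : a ≠ b) : ¬ U.Eq (app2 d (var a) (var b)) (var a) := by
  classical
  intro h
  have h' := h.subst fun v => if v = a then ofClosed e else var 0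
  simp only [app2_subst, var_subst, if_pos, if_neg hab.symm] at h'
  exact hU.not_eq_var (fv_ofClosed e) 0 (h'.symm.trans hdu)

theorem VarFree0.not_app2_eq_right {U : Theory} (hU : VarFree0 U) {d : Term U.sig Nat}
    {e : Term U.sig Empty} (hdu : U.Eq (app2 d (var 0) (ofClosed e)) (var 0))
    {V : Type} {a b : V} (hab : a ≠ b) : ¬ U.Eq (app2 d (var a) (var b)) (var b) := by
  classical
  intro h
  have h' := h.subst fun v => if v = b then ofClosed e else var 0
  simp only [app2_subst, var_subst, if_pos, if_neg hab] at h'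
  exact hU.not_eq_var (fv_ofClosed e) 0 (h'.symm.trans hdu)

section Sep

variable {S T : Theory} {V W : Type}

theorem sep_subst_inL (t : Term T.sig Nat) (σ : Nat → Term S.sig V) (φ : V → Term S.sig W) :
    (sep t σ).subst (fun v => (φ v).inL) = sep t fun n => (σ n).subst φ := by
  simp only [sep, subst_subst, inL_subst]

theorem sep_ofClosed (e : Term T.sig Empty) (σ : Nat → Term S.sig V) :
    sep (ofClosed e) σ = ofClosed e.inR := by
  simp [sep]

theorem fv_sep (t : Term T.sig Nat) (σ : Nat → Term S.sig V) :
    (sep t σ).fv = ⋃ n ∈ t.fv, (σ n).fv := by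
  simp [sep, fv_subst]

theorem sep_app2 (c : Term T.sig Nat) (a b : Term S.sig V) :
    sep c (fun n => if n = 0 then a else b) = app2 c.inR a.inL b.inL := by
  simp only [sep, app2, apply_ite Term.inL]

end Sep


-- `Theory.Eq.subst` would build the substituted terms over `C.U.sig`, which rewriting does not
-- identify with `S.sig.sum T.sig`.
theorem Composite.eq_subst {S T : Theory} (C : Composite S T) {V W : Type}
    {u u' : Term (S.sig.sum T.sig) V} (h : C.U.Eq u u') (f : V → Term (S.sig.sum T.sig) W) :
    C.U.Eq (u.subst f) (u'.subst f) :=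
  h.subst f

namespace IsComposite

variable {S T : Theory} {C : Composite S T}

theorem fv_eq_empty_of_eq_sep (hC : IsComposite C) (hT0 : VarFree0 T) {V : Type}
    {t t' : Term T.sig Nat} {σ σ' : Nat → Term S.sig V} (h : C.U.Eq (sep t σ) (sep t' σ'))
    (ht' : t'.fv = ∅) : t.fv = ∅ := by
  obtain ⟨Z, f, g, hfg, -⟩ := hC.essUniq t t' σ σ' h
  have hf := hT0 Z _ _ (by rw [fv_rename, ht', Set.image_empty]) hfg.symm
  rwa [fv_rename, Set.image_eq_empty] at hf

theorem exists_eq_of_inL_eq_sep (hC : IsComposite C) (hT0 : VarFree0 T) (hT1 : VarSingle T)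
    {V : Type} {s : Term S.sig V} {t : Term T.sig Nat} {σ : Nat → Term S.sig V}
    (h : C.U.Eq s.inL (sep t σ)) : ∃ j, S.Eq s (σ j) := by
  obtain ⟨Z, f, g, hfg, -, -, hfσ⟩ := hC.essUniq (var 0) t (fun _ => s) σ h
  obtain ⟨j, hj⟩ : t.fv.Nonempty := by
    refine Set.nonempty_iff_ne_empty.mpr fun ht => hT0.not_eq_var ?_ (f 0) hfg.symm
    rw [fv_rename, ht, Set.image_empty]
  have hgj : g j = f 0 := hT1 Z (f 0) _ hfg.symm (by rw [fv_rename]; exact ⟨j, hj, rfl⟩)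
  exact ⟨j, (hfσ 0 j).mp hgj.symm⟩

theorem exists_eq_of_inL_eq_subst (hC : IsComposite C) (hT0 : VarFree0 T) (hT1 : VarSingle T)
    (e : Term T.sig Empty) {V : Type} {s : Term S.sig V} {t : Term T.sig Nat}
    {τ : Nat → Term (S.sig.sum T.sig) V} (σ : Nat → Term S.sig V)
    (h : C.U.Eq s.inL (t.inR.subst τ))
    (hτ : ∀ n ∈ t.fv, C.U.Eq (τ n) (ofClosed e.inR) ∨ C.U.Eq (τ n) (σ n).inL) :
    ∃ j, S.Eq s (σ j) := by
  classical
  -- the arguments equal to the unit are absorbed into the `T`-part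
  let t' := t.subst fun n => if C.U.Eq (τ n) (ofClosed e.inR) then ofClosed e else var n
  refine hC.exists_eq_of_inL_eq_sep hT0 hT1 (t := t') (h.trans ?_)
  rw [sep, inR_subst, subst_subst]
  refine Theory.eq_subst_congr _ fun n hn => ?_
  replace hn : n ∈ t.fv := by rwa [← fv_inR (A := S.sig)]
  split_ifs with hn'
  · rw [inR_ofClosed, ofClosed_subst]
    exact hn'
  · exact (hτ n hn).resolve_left hn'

theorem op_inl_eq_unit (hC : IsComposite C) (hT0 : VarFree0 T) (hSu : HasUnits S)
    (e : Term T.sig Empty) {V : Type} (o : S.sig.Op) (k : Fin (S.sig.ar o))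
    (B : Fin (S.sig.ar o) → Term (S.sig.sum T.sig) V) :
    C.U.Eq (.op (Sum.inl o) fun i : Fin (S.sig.ar o) => if i = k then ofClosed e.inR else B i :
      Term (S.sig.sum T.sig) V) (ofClosed e.inR) := by
  -- Instantiating the free arguments of `m` by the unit `u` of `o` gives the constant `e`; by
  -- essential uniqueness the `T`-part of the separation of `m` is then closed, so all instances
  -- of `m` are equal.
  obtain ⟨u, hu⟩ := hSu o k.pos
  let m : Term (S.sig.sum T.sig) (Fin (S.sig.ar o)) :=
    .op (Sum.inl o) fun i : Fin (S.sig.ar o) => if i = k then ofClosed e.inR else var i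
  have hm_subst (φ : Fin (S.sig.ar o) → Term (S.sig.sum T.sig) V) : m.subst φ =
      .op (Sum.inl o) fun i : Fin (S.sig.ar o) => if i = k then ofClosed e.inR else φ i := by
    refine congrArg (Term.op (Sg := S.sig.sum T.sig) (Sum.inl o))
      (funext fun (i : Fin (S.sig.ar o)) => ?_)
    by_cases hi : i = k <;> simp [hi]
  have hmu : C.U.Eq (m.subst fun _ => (ofClosed u).inL) (ofClosed e.inR : Term _ V) := by
    have hu' : (m.subst fun _ => (ofClosed u).inL : Term _ V) =
        (Term.op o fun i => if i = k then var 0 else ofClosed u).inL.subst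
          fun _ => ofClosed e.inR := by
      rw [hm_subst]
      refine congrArg (Term.op (Sg := S.sig.sum T.sig) (Sum.inl o)) (funext fun i => ?_)
      by_cases hi : i = k <;> simp [hi]
    rw [hu']
    exact (hC.containsS _ _ (hu k)).subst _
  obtain ⟨t, σ, hm⟩ := hC.separation m
  have ht : t.fv = ∅ := by
    refine hC.fv_eq_empty_of_eq_sep hT0 (t' := ofClosed e) (σ' := fun _ => ofClosed u)
      (σ := fun n => (σ n).subst fun _ => (ofClosed u : Term _ V)) ?_ (fv_ofClosed e)
    rw [← sep_subst_inL, sep_ofClosed]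
    exact (hm.subst _).symm.trans hmu
  have hclosed : (sep t σ).fv = ∅ := by simp [fv_sep, ht]
  rw [← hm_subst]
  exact (hm.subst_eq_subst_of_fv_eq_empty hclosed _ _).trans hmu

theorem inL_subst_eq_unit (hC : IsComposite C) (hT0 : VarFree0 T) (hSu : HasUnits S)
    (e : Term T.sig Empty) {V W : Type} {θ : V → Term (S.sig.sum T.sig) W} {v₀ : V}
    (hθ : θ v₀ = ofClosed e.inR) {s : Term S.sig V} (hs : v₀ ∈ s.fv) :
    C.U.Eq (s.inL.subst θ) (ofClosed e.inR) := by
  induction s with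
  | var v =>
    obtain rfl : v₀ = v := hs
    rw [inL_var, var_subst, hθ]
    exact .refl _
  | op o ts ih =>
    obtain ⟨k, hk⟩ := Set.mem_iUnion.mp hs
    change C.U.Eq (.op (Sum.inl o) fun i : Fin (S.sig.ar o) => (ts i).inL.subst θ :
      Term (S.sig.sum T.sig) W) _
    refine .trans ?_ (hC.op_inl_eq_unit hT0 hSu e o k fun i => (ts i).inL.subst θ)
    refine Theory.Eq.congr (T := C.U) (Sum.inl o) fun (i : Fin (S.sig.ar o)) => ?_
    by_cases hi : i = k
    · rw [if_pos hi]
      exact ih i (hi ▸ hk)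
    · rw [if_neg hi]
      exact .refl _

theorem inL_subst_eq_unit_or_eq_var (hC : IsComposite C) (hT0 : VarFree0 T) (hSu : HasUnits S)
    (hS1 : VarSingle S) (e : Term T.sig Empty) {V W : Type} {s : Term S.sig V} {ρ : V → W}
    {a v₀ : V} {b : W} {θ : V → Term (S.sig.sum T.sig) V} (hs : S.Eq (s.rename ρ) (var b))
    (hρ : ∀ v, ρ v = b → v = a ∨ v = v₀) (hθa : θ a = var a)
    (hθ : θ v₀ = ofClosed e.inR) :
    C.U.Eq (s.inL.subst θ) (ofClosed e.inR) ∨ C.U.Eq (s.inL.subst θ) (var a) := by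
  by_cases hv₀ : v₀ ∈ s.fv
  · exact .inl (hC.inL_subst_eq_unit hT0 hSu e hθ hv₀)
  have hsa : s.fv ⊆ {a} := fun v hv =>
    (hρ v (hS1.eq_of_mem_fv_of_rename_eq_var hs hv)).resolve_right (ne_of_mem_of_not_mem hv hv₀)
  right
  rw [subst_eq_self fun v hv => by rw [fv_inL] at hv; rw [hsa hv, hθa]]
  exact hC.containsS _ _ (hs.eq_var_of_rename hsa)

theorem app2_inL_self (hC : IsComposite C) {d : Term S.sig Nat}
    (hd : S.Eq (d.subst fun _ => var 0) (var 0)) {V : Type} (a : Term (S.sig.sum T.sig) V) :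
    C.U.Eq (app2 d.inL a a : Term (S.sig.sum T.sig) V) a := by
  have h : app2 d.inL a a = (d.subst fun _ => var 0).inL.subst fun _ => a := by
    simp [app2, inL_subst, subst_subst]
  rw [h]
  exact (hC.containsS _ _ hd).subst _

theorem app2_inR_unit_right (hC : IsComposite C) {c : Term T.sig Nat} {e : Term T.sig Empty}
    (hc : T.Eq (app2 c (var 0) (ofClosed e)) (var 0)) {V : Type} (a : Term (S.sig.sum T.sig) V) :
    C.U.Eq (app2 c.inR a (ofClosed e.inR) : Term (S.sig.sum T.sig) V) a := by
  have h : app2 c.inR a (ofClosed e.inR) =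
      (app2 c (var 0) (ofClosed e)).inR.subst fun _ => a := by
    simp [inR_app2, app2_subst]
  rw [h]
  exact (hC.containsT _ _ hc).subst _

theorem app2_inR_unit_left (hC : IsComposite C) {c : Term T.sig Nat} {e : Term T.sig Empty}
    (hc : T.Eq (app2 c (ofClosed e) (var 0)) (var 0)) {V : Type} (a : Term (S.sig.sum T.sig) V) :
    C.U.Eq (app2 c.inR (ofClosed e.inR) a : Term (S.sig.sum T.sig) V) a := by
  have h : app2 c.inR (ofClosed e.inR) a =
      (app2 c (ofClosed e) (var 0)).inR.subst fun _ => a := by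
    simp [inR_app2, app2_subst]
  rw [h]
  exact (hC.containsT _ _ hc).subst _

theorem rename_eq_var_or_eq_var (hC : IsComposite C) (hS1 : VarSingle S) (hT1 : VarSingle T)
    {d : Term S.sig Nat} (hd : S.Eq (d.subst fun _ => var 0) (var 0)) {c : Term T.sig Nat}
    (hc : c.fv ⊆ {0, 1}) {e : Term T.sig Empty} (hcu : T.Eq (app2 c (var 0) (ofClosed e)) (var 0))
    {t : Term T.sig Nat} {σ : Nat → Term S.sig (Fin 4)}
    (hsep : C.U.Eq (app2 d.inL (app2 c.inR (var 0) (var 1)) (app2 c.inR (var 2) (var 3)) :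
      Term (S.sig.sum T.sig) (Fin 4)) (sep t σ)) :
    ∀ n ∈ t.fv, S.Eq ((σ n).rename ![0, 1, 0, 1]) (var (0 : Fin 4)) ∨
      S.Eq ((σ n).rename ![0, 1, 0, 1]) (var (1 : Fin 4)) := by
  -- identifying `2` with `0` and `3` with `1` makes the two arguments of `d` equal
  let ρ : Fin 4 → Fin 4 := ![0, 1, 0, 1]
  obtain ⟨Z, f, g, htc, -, hg, hfg⟩ := hC.essUniq t c (fun n => (σ n).rename ρ)
    (fun n => if n = 0 then var 0 else var 1) (by
      have h := C.eq_subst hsep fun v => (var (ρ v) : Term S.sig (Fin 4)).inL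
      simp only [app2_subst, var_subst, sep_subst_inL] at h
      rw [sep_app2]
      exact h.symm.trans (hC.app2_inL_self hd _))
  have hg01 : g 0 ≠ g 1 := fun h => hS1.not_eq_var_var (by decide) ((hg 0 1).mp h)
  rw [rename_eq_app2 hc] at htc
  intro n hn
  have hfn := hT1.fv_subset_of_eq_app2 hcu hg01 htc (by rw [fv_rename]; exact ⟨n, hn, rfl⟩)
  rcases hfn with h | h
  exacts [.inl ((hfg n 0).mp h), .inr ((hfg n 1).mp h)]

end IsComposite

theorem no_composite_idempotence_units_general (S T : Theory)
    (hS0 : VarFree0 S) (hS1 : VarSingle S) (hSu : HasUnits S)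
    (d : Term S.sig Nat) (eS : Term S.sig Empty)
    (hdu1 : S.Eq (app2 d (.var 0) (Term.ofClosed eS)) (.var (0 : Nat)))
    (hdu2 : S.Eq (app2 d (Term.ofClosed eS) (.var 0)) (.var (0 : Nat)))
    (hT0 : VarFree0 T) (hT1 : VarSingle T)
    (c : Term T.sig Nat) (hc : c.fv ⊆ {0, 1}) (eT : Term T.sig Empty)
    (hcu1 : T.Eq (app2 c (.var 0) (Term.ofClosed eT)) (.var (0 : Nat)))
    (hcu2 : T.Eq (app2 c (Term.ofClosed eT) (.var 0)) (.var (0 : Nat)))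
    (hdidem : S.Eq (d.subst (fun _ => .var (0 : Nat))) (.var 0)) :
    ∀ C : Composite S T, ¬ IsComposite C := by
  classical
  intro C hC
  obtain ⟨t, σ, hsep⟩ := hC.separation
    (app2 d.inL (app2 c.inR (var 0) (var 1)) (app2 c.inR (var 2) (var 3)) :
      Term (S.sig.sum T.sig) (Fin 4))
  have hσ := hC.rename_eq_var_or_eq_var hS1 hT1 hdidem hc hcu1 hsep
  let θ : Fin 4 → Term (S.sig.sum T.sig) (Fin 4) :=
    ![var 0, ofClosed eT.inR, ofClosed eT.inR, var 3]
  have hθ : C.U.Eq (app2 d (var 0) (var 3)).inL (t.inR.subst fun n => (σ n).inL.subst θ) := by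
    have h := C.eq_subst hsep θ
    simp only [app2_subst, var_subst, sep, subst_subst] at h
    rw [inL_app2]
    exact (Theory.eq_app2_congr _ (hC.app2_inR_unit_right hcu1 _)
      (hC.app2_inR_unit_left hcu2 _)).symm.trans h
  obtain ⟨j, hj⟩ := hC.exists_eq_of_inL_eq_subst hT0 hT1 eT
    (fun n => if S.Eq ((σ n).rename ![0, 1, 0, 1]) (var (0 : Fin 4)) then var 0 else var 3) hθ
    fun n hn => by
      split_ifs with h
      · exact hC.inL_subst_eq_unit_or_eq_var hT0 hSu hS1 eT (v₀ := 2) h (by decide) rfl rfl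
      · exact hC.inL_subst_eq_unit_or_eq_var hT0 hSu hS1 eT (v₀ := 1)
          ((hσ n hn).resolve_left h) (by decide) rfl rfl
  split_ifs at hj
  exacts [hS0.not_app2_eq_left hdu2 (by decide) hj, hS0.not_app2_eq_right hdu1 (by decide) hj]

/-- **No-go theorem: idempotence and units.** Under the hypotheses of the
times-over-plus theorem, if moreover the binary term `⋄` of `𝕊` is idempotent, then
there is no composite theory of `𝕊` and `𝕋`. -/
theorem no_composite_idempotence_units (S T : Theory)
    (hS0 : VarFree0 S) (hS1 : VarSingle S) (hSu : HasUnits S)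
    (d : Term S.sig Nat) (hd : d.fv ⊆ {0, 1}) (eS : Term S.sig Empty)
    (hdu1 : S.Eq (app2 d (.var 0) (Term.ofClosed eS)) (.var (0 : Nat)))
    (hdu2 : S.Eq (app2 d (Term.ofClosed eS) (.var 0)) (.var (0 : Nat)))
    (hT0 : VarFree0 T) (hT1 : VarSingle T)
    (c : Term T.sig Nat) (hc : c.fv ⊆ {0, 1}) (eT : Term T.sig Empty)
    (hcu1 : T.Eq (app2 c (.var 0) (Term.ofClosed eT)) (.var (0 : Nat)))
    (hcu2 : T.Eq (app2 c (Term.ofClosed eT) (.var 0)) (.var (0 : Nat)))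
    (hdidem : S.Eq (d.subst (fun _ => .var (0 : Nat))) (.var 0)) :
    ∀ C : Composite S T, ¬ IsComposite C :=
  no_composite_idempotence_units_general S T hS0 hS1 hSu d eS hdu1 hdu2 hT0 hT1 c hc eT hcu1 hcu2
    hdidem
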